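/- arXiv:2602.10045 — 5 statements merged into one kernel-verified Lean document; each statement's English description precedes it below -/
import Mathlib

section
/- Under the i.i.d. sampling assumption and the feasibility assumption μ_τ({1,…,k}) > 1−α, Algorithm 1's prediction sets are asymptotically valid: liminf_{n→∞} P( {J^{(n)} ≠ NA} and max_{ŷ ∈ C^{(n)}(X^test)} IoU(Y^test, ŷ) > τ ) ≥ 1 − α, where C^{(n)}(X^test) = {f(X^test, j) : j ∈ J^{(n)}} on the event {J^{(n)} ≠ NA}. -/
open MeasureTheory ProbabilityTheory Filter
open scoped Classical

/-- A binary mask on a `W × H` grid: `true` encodes the value 1. -/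
abbrev Mask (W H : ℕ) := Fin W × Fin H → Bool

/-- Intersection-over-Union of two binary masks, with the convention
`IoU A B = 1` when the union is empty. -/
noncomputable def IoU {W H : ℕ} (A B : Mask W H) : ℝ :=
  if (Finset.univ.filter (fun p : Fin W × Fin H => A p = true ∨ B p = true)).card = 0 then 1
  else ((Finset.univ.filter (fun p : Fin W × Fin H => A p = true ∧ B p = true)).card : ℝ) /
    ((Finset.univ.filter (fun p : Fin W × Fin H => A p = true ∨ B p = true)).card : ℝ)

variable {𝒳 : Type*} [MeasurableSpace 𝒳] {W H k : ℕ}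

/-- `μ_τ(J)`: the probability under the law `P` that some parameter index `j ∈ J`
produces a mask with `IoU` exceeding `τ` against the true mask. -/
noncomputable def muTau (P : Measure (𝒳 × Mask W H)) (f : 𝒳 → Fin k → Mask W H)
    (τ : ℝ) (J : Finset (Fin k)) : ENNReal :=
  P {p | ∃ j ∈ J, τ < IoU p.2 (f p.1 j)}

/-- `Covers Z f α τ n ω J` says that the parameter set `J` covers at least a
`(1−α)` fraction of the first `n` calibration samples `Z 1 ω, …, Z n ω`:
`|⋃_{j ∈ J} S_j^{(n)}| ≥ (1−α)·n`. -/
def Covers (Z : ℕ → Ω → 𝒳 × Mask W H) (f : 𝒳 → Fin k → Mask W H) (α τ : ℝ)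
    (n : ℕ) (ω : Ω) (J : Finset (Fin k)) : Prop :=
  (1 - α) * n ≤ (((Finset.Icc 1 n).filter
    (fun i => ∃ j ∈ J, τ < IoU (Z i ω).2 (f (Z i ω).1 j))).card : ℝ)

open scoped Topology ENNReal

/-!
By the strong law of large numbers, the fraction of calibration samples covered by a parameter
set `J` tends almost surely to `μ_τ(J)`. Hence, with probability tending to one, the full set is
feasible (so the algorithm does not return NA) while no `J` with `μ_τ(J) < 1 − α` is, so the
selected `J^{(n)}` has `μ_τ(J^{(n)}) ≥ 1 − α`. As `J^{(n)}` is a function of the calibration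
samples only, it is independent of the test point, which `J` therefore covers with probability
exactly `μ_τ(J)` on the event `J^{(n)} = J`.
-/

section Selection

variable {β Ω : Type*} {lt : β → β → Prop}

theorem exists_eq_some_of_selects_least [Finite β] [IsStrictTotalOrder β lt] {p : β → Prop}
    {o : Option β} (ho : ∀ b, o = some b ↔ p b ∧ ∀ b', p b' → b = b' ∨ lt b b') {b₀ : β}
    (hb₀ : p b₀) : ∃ b, o = some b := by
  have : IsWellOrder β lt := { wf := Finite.wellFounded_of_trans_of_irrefl lt }
  obtain ⟨b, hb, hleast⟩ :=
    WellFounded.isWellOrder_iff_exists_not_lt_and_eq_or_gt.1 ‹_› {b | p b} ⟨b₀, hb₀⟩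
  exact ⟨b, (ho b).2 ⟨hb, fun b' hb' => (hleast b' hb').2⟩⟩

theorem measurableSet_eq_some_of_selects_least [Finite β] {_ : MeasurableSpace Ω}
    {C : Ω → β → Prop} {sel : Ω → Option β}
    (hsel : ∀ ω b, sel ω = some b ↔ C ω b ∧ ∀ b', C ω b' → b = b' ∨ lt b b')
    (hC : ∀ b, MeasurableSet {ω | C ω b}) (b : β) : MeasurableSet {ω | sel ω = some b} := by
  simp_rw [hsel]
  exact measurableSet_setOfPred.2 <| (measurableSet_setOfPred.1 (hC b)).and <|
    Measurable.forall fun b' => (measurableSet_setOfPred.1 (hC b')).imp measurable_const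

theorem tendsto_measure_not_exists_mem_eq_some [Fintype β] [IsStrictTotalOrder β lt]
    {_ : MeasurableSpace Ω} {μ : Measure Ω} {C : ℕ → Ω → β → Prop} {sel : ℕ → Ω → Option β}
    (hsel : ∀ n ω b, sel n ω = some b ↔ C n ω b ∧ ∀ b', C n ω b' → b = b' ∨ lt b b')
    {G : Finset β} {b₀ : β} (h₀ : Tendsto (fun n => μ {ω | ¬ C n ω b₀}) atTop (𝓝 0))
    (hbad : ∀ b ∉ G, Tendsto (fun n => μ {ω | C n ω b}) atTop (𝓝 0)) :
    Tendsto (fun n => μ {ω | ¬ ∃ b ∈ G, sel n ω = some b}) atTop (𝓝 0) := by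
  have hsub : ∀ n, {ω | ¬ ∃ b ∈ G, sel n ω = some b} ⊆
      {ω | ¬ C n ω b₀} ∪ ⋃ b ∈ Gᶜ, {ω | C n ω b} := by
    intro n ω hω
    by_contra hout
    simp only [Set.mem_union, Set.mem_ofPred_eq, not_not, Set.mem_iUnion, Finset.mem_compl,
      not_or, not_exists] at hout hω
    obtain ⟨b, hb⟩ := exists_eq_some_of_selects_least (hsel n ω) hout.1
    by_cases hbG : b ∈ G
    · exact hω b ⟨hbG, hb⟩
    · exact hout.2 b hbG ((hsel n ω b).1 hb).1
  have hbound : Tendsto (fun n => μ {ω | ¬ C n ω b₀} + ∑ b ∈ Gᶜ, μ {ω | C n ω b}) atTop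
      (𝓝 0) := by
    simpa using h₀.add (tendsto_finsetSum _ fun b hb => hbad b (Finset.mem_compl.1 hb))
  refine tendsto_of_tendsto_of_tendsto_of_le_of_le tendsto_const_nhds hbound
    (fun _ => zero_le) fun n => ?_
  calc μ {ω | ¬ ∃ b ∈ G, sel n ω = some b}
      ≤ μ ({ω | ¬ C n ω b₀} ∪ ⋃ b ∈ Gᶜ, {ω | C n ω b}) := measure_mono (hsub n)
    _ ≤ μ {ω | ¬ C n ω b₀} + μ (⋃ b ∈ Gᶜ, {ω | C n ω b}) := measure_union_le _ _
    _ ≤ _ := by gcongr; exact measure_biUnion_finset_le _ _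

theorem mul_measure_exists_mem_eq_some_le {_ : MeasurableSpace Ω} {μ : Measure Ω}
    {sel : Ω → Option β} {E : β → Set Ω} {q : β → ℝ≥0∞} {c : ℝ≥0∞} {G : Finset β}
    (hsel : ∀ b, MeasurableSet {ω | sel ω = some b}) (hE : ∀ b, MeasurableSet (E b))
    (hindep : ∀ b, μ ({ω | sel ω = some b} ∩ E b) = μ {ω | sel ω = some b} * q b)
    (hG : ∀ b ∈ G, c ≤ q b) :
    c * μ {ω | ∃ b ∈ G, sel ω = some b} ≤ μ {ω | ∃ b, sel ω = some b ∧ ω ∈ E b} := by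
  have hdisj : (G : Set β).PairwiseDisjoint fun b => {ω | sel ω = some b} ∩ E b := by
    intro b _ b' _ hbb'
    refine Set.disjoint_left.2 fun ω hω hω' => hbb' ?_
    exact Option.some_injective _ (hω.1.symm.trans hω'.1)
  calc c * μ {ω | ∃ b ∈ G, sel ω = some b}
      = c * μ (⋃ b ∈ G, {ω | sel ω = some b}) := by congr 2; ext; simp
    _ ≤ c * ∑ b ∈ G, μ {ω | sel ω = some b} := by gcongr; exact measure_biUnion_finset_le _ _
    _ ≤ ∑ b ∈ G, μ {ω | sel ω = some b} * q b := by
      rw [Finset.mul_sum]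
      exact Finset.sum_le_sum fun b hb => by rw [mul_comm]; gcongr; exact hG b hb
    _ = μ (⋃ b ∈ G, {ω | sel ω = some b} ∩ E b) := by
      rw [measure_biUnion_finset hdisj fun b _ => (hsel b).inter (hE b)]
      simp_rw [hindep]
    _ ≤ μ {ω | ∃ b, sel ω = some b ∧ ω ∈ E b} :=
      measure_mono fun ω hω => by
        obtain ⟨b, -, hb⟩ := Set.mem_iUnion₂.1 hω
        exact ⟨b, hb⟩

theorem tendsto_measure_of_tendsto_measure_compl {_ : MeasurableSpace Ω} {μ : Measure Ω}
    [IsProbabilityMeasure μ] {s : ℕ → Set Ω} (hs : ∀ n, MeasurableSet (s n))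
    (h : Tendsto (fun n => μ (s n)ᶜ) atTop (𝓝 0)) : Tendsto (fun n => μ (s n)) atTop (𝓝 1) := by
  have hlim := ENNReal.Tendsto.sub tendsto_const_nhds h (Or.inl ENNReal.one_ne_top)
  rw [tsub_zero] at hlim
  refine hlim.congr fun n => ?_
  rw [prob_compl_eq_one_sub (hs n), ENNReal.sub_sub_cancel ENNReal.one_ne_top prob_le_one]

end Selection

section Frequencies

variable {Ω E : Type*} {Z : ℕ → Ω → E} {A : Set E}

noncomputable def hitCount (Z : ℕ → Ω → E) (A : Set E) (n : ℕ) (ω : Ω) : ℕ :=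
  ((Finset.Icc 1 n).filter fun i => Z i ω ∈ A).card

theorem hitCount_eq_sum_indicator (n : ℕ) (ω : Ω) :
    (hitCount Z A n ω : ℝ) = ∑ i ∈ Finset.Icc 1 n, A.indicator 1 (Z i ω) := by
  rw [hitCount, Finset.natCast_card_filter]
  simp only [Set.indicator_apply, Pi.one_apply]

variable {mΩ : MeasurableSpace Ω} [mE : MeasurableSpace E] {μ : Measure Ω}

theorem measurable_hitCount (hA : MeasurableSet A) {n : ℕ}
    (hZ : ∀ i ∈ Finset.Icc 1 n, Measurable (Z i)) :
    Measurable fun ω => (hitCount Z A n ω : ℝ) := by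
  simp_rw [hitCount_eq_sum_indicator]
  exact Finset.measurable_sum _ fun i hi => (measurable_one.indicator hA).comp (hZ i hi)

theorem measurable_hitCount_iSup_comap (hA : MeasurableSet A) (n : ℕ) :
    Measurable[⨆ i ∈ Set.Ioi 0, mE.comap (Z i)] fun ω => (hitCount Z A n ω : ℝ) :=
  measurable_hitCount hA fun i hi => measurable_iff_comap_le.2 <|
    le_iSup₂ (f := fun i (_ : i ∈ Set.Ioi 0) => mE.comap (Z i)) i (Finset.mem_Icc.1 hi).1

theorem ae_tendsto_hitCount_div [IsProbabilityMeasure μ] {P : Measure E}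
    (hZ : ∀ i, Measurable (Z i)) (hindep : Pairwise fun i j => IndepFun (Z i) (Z j) μ)
    (hlaw : ∀ i, μ.map (Z i) = P) (hA : MeasurableSet A) :
    ∀ᵐ ω ∂μ, Tendsto (fun n : ℕ => (hitCount Z A n ω : ℝ) / n) atTop (𝓝 (P.real A)) := by
  set X : ℕ → Ω → ℝ := fun i => A.indicator 1 ∘ Z (i + 1)
  have hg : Measurable (A.indicator (1 : E → ℝ)) := measurable_one.indicator hA
  have hident : ∀ i, IdentDistrib (X i) (X 0) μ μ := fun i =>
    IdentDistrib.comp ⟨(hZ _).aemeasurable, (hZ _).aemeasurable, by rw [hlaw, hlaw]⟩ hg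
  have hmean : μ[X 0] = P.real A := by
    change ∫ ω, A.indicator 1 (Z 1 ω) ∂μ = _
    rw [← hlaw 1, ← integral_map (hZ 1).aemeasurable hg.aestronglyMeasurable,
      integral_indicator_one hA]
  have hsum : ∀ n ω, (hitCount Z A n ω : ℝ) = ∑ i ∈ Finset.range n, X i ω := by
    intro n ω
    rw [hitCount_eq_sum_indicator, ← Finset.Ico_add_one_right_eq_Icc,
      Finset.sum_Ico_eq_sum_range]
    simp [X, add_comm]
  have hslln := strong_law_ae_real X
    ((integrable_const (1 : ℝ)).indicator hA |>.comp_measurable (hZ 1))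
    (fun i j hij => (hindep (by omega : i + 1 ≠ j + 1)).comp hg hg) hident
  simpa [hsum, hmean] using hslln

theorem tendsto_measure_of_ae_eventually_notMem [IsFiniteMeasure μ] {S : ℕ → Set Ω}
    (hS : ∀ n, MeasurableSet (S n)) (h : ∀ᵐ ω ∂μ, ∀ᶠ n in atTop, ω ∉ S n) :
    Tendsto (fun n => μ (S n)) atTop (𝓝 0) := by
  simpa using tendsto_measure_of_ae_tendsto_indicator_of_isFiniteMeasure atTop
    MeasurableSet.empty hS (by simpa using h)

variable [IsProbabilityMeasure μ] {P : Measure E} {c : ℝ}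
  (hZ : ∀ i, Measurable (Z i)) (hindep : Pairwise fun i j => IndepFun (Z i) (Z j) μ)
  (hlaw : ∀ i, μ.map (Z i) = P) (hA : MeasurableSet A)
include hZ hindep hlaw hA

theorem tendsto_measure_le_hitCount (hc : P.real A < c) :
    Tendsto (fun n : ℕ => μ {ω | c * n ≤ hitCount Z A n ω}) atTop (𝓝 0) := by
  refine tendsto_measure_of_ae_eventually_notMem
    (fun n => measurableSet_le measurable_const (measurable_hitCount hA fun i _ => hZ i)) ?_
  filter_upwards [ae_tendsto_hitCount_div hZ hindep hlaw hA] with ω hω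
  filter_upwards [hω.eventually_lt_const hc, eventually_gt_atTop 0] with n hlt hn
  rw [div_lt_iff₀ (by exact_mod_cast hn)] at hlt
  exact fun hle => hle.not_gt hlt

theorem tendsto_measure_not_le_hitCount (hc : c < P.real A) :
    Tendsto (fun n : ℕ => μ {ω | ¬ c * n ≤ hitCount Z A n ω}) atTop (𝓝 0) := by
  refine tendsto_measure_of_ae_eventually_notMem
    (fun n => (measurableSet_le measurable_const
      (measurable_hitCount hA fun i _ => hZ i)).compl) ?_
  filter_upwards [ae_tendsto_hitCount_div hZ hindep hlaw hA] with ω hω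
  filter_upwards [hω.eventually_const_lt hc, eventually_gt_atTop 0] with n hlt hn
  rw [lt_div_iff₀ (by exact_mod_cast hn)] at hlt
  exact not_not.2 hlt.le

end Frequencies

theorem measure_preimage_inter_eq_mul_of_iIndepFun {Ω E ι : Type*} {_ : MeasurableSpace Ω}
    [mE : MeasurableSpace E] {μ : Measure Ω} {Z : ι → Ω → E} (hZ : ∀ i, Measurable (Z i))
    (hindep : iIndepFun Z μ) {i : ι} {T : Set ι} (hi : i ∉ T) {A : Set E}
    (hA : MeasurableSet A) {B : Set Ω} (hB : MeasurableSet[⨆ j ∈ T, mE.comap (Z j)] B) :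
    μ (Z i ⁻¹' A ∩ B) = μ (Z i ⁻¹' A) * μ B := by
  refine (Indep_iff _ _ _).1 (indep_iSup_of_disjoint (fun j => (hZ j).comap_le) hindep.iIndep
    (Set.disjoint_singleton_left.2 hi)) _ _ ?_ hB
  exact le_iSup₂ (f := fun j (_ : j ∈ ({i} : Set ι)) => mE.comap (Z j)) i rfl _ ⟨A, hA, rfl⟩

theorem le_liminf_toReal_of_ofReal_mul_le {u v : ℕ → ℝ≥0∞} {c : ℝ} (hu : ∀ n, u n ≤ 1)
    (hv : Tendsto v atTop (𝓝 1)) (h : ∀ n, ENNReal.ofReal c * v n ≤ u n) :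
    c ≤ liminf (fun n => (u n).toReal) atTop := by
  have hlim : Tendsto (fun n => c * (v n).toReal) atTop (𝓝 c) := by
    simpa using ((ENNReal.tendsto_toReal ENNReal.one_ne_top).comp hv).const_mul c
  have hle : ∀ n, c * (v n).toReal ≤ (u n).toReal := fun n =>
    calc c * (v n).toReal ≤ (ENNReal.ofReal c).toReal * (v n).toReal :=
          mul_le_mul_of_nonneg_right (le_max_left c 0) ENNReal.toReal_nonneg
      _ = (ENNReal.ofReal c * v n).toReal := ENNReal.toReal_mul.symm
      _ ≤ (u n).toReal := ENNReal.toReal_mono (ne_top_of_le_ne_top ENNReal.one_ne_top (hu n)) (h n)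
  have hbdd : IsBoundedUnder (· ≤ ·) atTop fun n => (u n).toReal :=
    isBoundedUnder_of ⟨1, fun n => ENNReal.toReal_le_of_le_ofReal zero_le_one (by simpa using hu n)⟩
  calc c = liminf (fun n => c * (v n).toReal) atTop := hlim.liminf_eq.symm
    _ ≤ liminf (fun n => (u n).toReal) atTop :=
      liminf_le_liminf (Eventually.of_forall hle) hlim.isBoundedUnder_ge hbdd.isCoboundedUnder_ge

def hitSet {X : Type*} (f : X → Fin k → Mask W H) (τ : ℝ) (J : Finset (Fin k)) :
    Set (X × Mask W H) :=
  {p | ∃ j ∈ J, τ < IoU p.2 (f p.1 j)}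

theorem measurableSet_hitSet {X : Type*} [MeasurableSpace X] {f : X → Fin k → Mask W H}
    (hf : ∀ j, Measurable fun x => f x j) (τ : ℝ) (J : Finset (Fin k)) :
    MeasurableSet (hitSet f τ J) := by
  have hj : ∀ j, MeasurableSet {p : X × Mask W H | τ < IoU p.2 (f p.1 j)} := fun j =>
    (Set.toFinite {q : Mask W H × Mask W H | τ < IoU q.1 q.2}).measurableSet.preimage
      (measurable_snd.prodMk ((hf j).comp measurable_fst))
  exact measurableSet_setOfPred.2 <| Measurable.exists fun j =>
    measurable_const.and (measurableSet_setOfPred.1 (hj j))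

theorem covers_iff_le_hitCount {Ω X : Type*} {Z : ℕ → Ω → X × Mask W H} {f : X → Fin k → Mask W H}
    {α τ : ℝ} {n : ℕ} {ω : Ω} {J : Finset (Fin k)} :
    Covers Z f α τ n ω J ↔ (1 - α) * n ≤ hitCount Z (hitSet f τ J) n ω :=
  by unfold Covers hitCount hitSet; congr!

theorem algorithm1_asymptotic_validity_general
    {Ω : Type*} [MeasurableSpace Ω]
    (Pr : Measure Ω) [IsProbabilityMeasure Pr]
    (P : Measure (𝒳 × Mask W H)) [IsProbabilityMeasure P]
    (f : 𝒳 → Fin k → Mask W H) (hf : ∀ j, Measurable (fun x => f x j))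
    (α τ : ℝ)
    (Z : ℕ → Ω → 𝒳 × Mask W H) (hZmeas : ∀ i, Measurable (Z i))
    (hindep : iIndepFun Z Pr)
    (hlaw : ∀ i, Measure.map (Z i) Pr = P)
    (hfeas : ENNReal.ofReal (1 - α) < muTau P f τ (Finset.univ : Finset (Fin k)))
    (lt : Finset (Fin k) → Finset (Fin k) → Prop)
    (hlto : IsStrictTotalOrder (Finset (Fin k)) lt)
    (Jn : ℕ → Ω → Option (Finset (Fin k)))
    (hJn : ∀ (n : ℕ) (ω : Ω) (J : Finset (Fin k)), Jn n ω = some J ↔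
      (Covers Z f α τ n ω J ∧
        ∀ J' : Finset (Fin k), Covers Z f α τ n ω J' → J = J' ∨ lt J J')) :
    1 - α ≤ liminf (fun n : ℕ =>
        (Pr {ω | ∃ J, Jn n ω = some J ∧
          ∃ j ∈ J, τ < IoU (Z 0 ω).2 (f (Z 0 ω).1 j)}).toReal) atTop := by
  simp_rw [covers_iff_le_hitCount] at hJn
  have hA : ∀ J, MeasurableSet (hitSet f τ J) := measurableSet_hitSet hf τ
  have hpair : Pairwise fun i j => IndepFun (Z i) (Z j) Pr := fun i j hij => hindep.indepFun hij
  have hcalib : ∀ n J, MeasurableSet[⨆ i ∈ Set.Ioi 0, MeasurableSpace.comap (Z i) inferInstance]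
      {ω | Jn n ω = some J} := fun n =>
    measurableSet_eq_some_of_selects_least (hJn n) fun J =>
      measurableSet_le measurable_const (measurable_hitCount_iSup_comap (hA J) n)
  have hsel : ∀ n J, MeasurableSet {ω | Jn n ω = some J} := fun n J =>
    iSup₂_le (fun i _ => (hZmeas i).comap_le) _ (hcalib n J)
  set good := Finset.univ.filter fun J => ENNReal.ofReal (1 - α) ≤ P (hitSet f τ J)
  have hgood : Tendsto (fun n => Pr {ω | ∃ J ∈ good, Jn n ω = some J}) atTop (𝓝 1) := by
    have := hlto
    refine tendsto_measure_of_tendsto_measure_compl (fun n => measurableSet_setOfPred.2 <|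
      Measurable.exists fun J => measurable_const.and (measurableSet_setOfPred.1 (hsel n J))) ?_
    exact tendsto_measure_not_exists_mem_eq_some hJn
      (tendsto_measure_not_le_hitCount hZmeas hpair hlaw (hA _)
        ((le_max_left _ 0).trans_lt (ENNReal.toReal_strict_mono (measure_ne_top P _) hfeas)))
      fun J hJ => tendsto_measure_le_hitCount hZmeas hpair hlaw (hA J)
        (ENNReal.toReal_lt_of_lt_ofReal (by simpa [good] using hJ))
  refine le_liminf_toReal_of_ofReal_mul_le (fun n => prob_le_one) hgood fun n => ?_
  refine mul_measure_exists_mem_eq_some_le (E := fun J => Z 0 ⁻¹' hitSet f τ J) (hsel n)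
    (fun J => hZmeas 0 (hA J)) (fun J => ?_) fun J hJ => (Finset.mem_filter.1 hJ).2
  rw [Set.inter_comm, measure_preimage_inter_eq_mul_of_iIndepFun hZmeas hindep (lt_irrefl 0)
    (hA J) (hcalib n J), mul_comm, ← Measure.map_apply (hZmeas 0) (hA J), hlaw 0]

/-- Under i.i.d. sampling and the feasibility assumption
`μ_τ({1,…,k}) > 1−α`, Algorithm 1's prediction sets are asymptotically valid:
`liminf_n P(J^{(n)} ≠ NA and max_{ŷ ∈ C^{(n)}(X^test)} IoU(Y^test, ŷ) > τ) ≥ 1 − α`,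
where `C^{(n)}(X^test) = {f(X^test, j) : j ∈ J^{(n)}}` and the test point is `Z 0`. -/
theorem algorithm1_asymptotic_validity
    (hk : 1 ≤ k) {Ω : Type*} [MeasurableSpace Ω]
    (Pr : Measure Ω) [IsProbabilityMeasure Pr]
    (P : Measure (𝒳 × Mask W H)) [IsProbabilityMeasure P]
    (f : 𝒳 → Fin k → Mask W H) (hf : ∀ j, Measurable (fun x => f x j))
    (α τ : ℝ) (hα : α ∈ Set.Ioo (0:ℝ) 1) (hτ : τ ∈ Set.Ioo (0:ℝ) 1)
    (Z : ℕ → Ω → 𝒳 × Mask W H) (hZmeas : ∀ i, Measurable (Z i))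
    (hindep : iIndepFun Z Pr)
    (hlaw : ∀ i, Measure.map (Z i) Pr = P)
    (hfeas : ENNReal.ofReal (1 - α) < muTau P f τ (Finset.univ : Finset (Fin k)))
    (lt : Finset (Fin k) → Finset (Fin k) → Prop)
    (hlto : IsStrictTotalOrder (Finset (Fin k)) lt)
    (hltcard : ∀ J J' : Finset (Fin k), J.card < J'.card → lt J J')
    (Jn : ℕ → Ω → Option (Finset (Fin k)))
    (hJn : ∀ (n : ℕ) (ω : Ω) (J : Finset (Fin k)), Jn n ω = some J ↔
      (Covers Z f α τ n ω J ∧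
        ∀ J' : Finset (Fin k), Covers Z f α τ n ω J' → J = J' ∨ lt J J')) :
    1 - α ≤ liminf (fun n : ℕ =>
        (Pr {ω | ∃ J, Jn n ω = some J ∧
          ∃ j ∈ J, τ < IoU (Z 0 ω).2 (f (Z 0 ω).1 j)}).toReal) atTop :=
  algorithm1_asymptotic_validity_general Pr P f hf α τ Z hZmeas hindep hlaw hfeas lt hlto Jn hJn
end

section
/- Under the i.i.d. sampling assumption and the feasibility assumption μ_τ({1,…,k}) > 1−α, the probability that Algorithm 1 fails to return a parameter set tends to zero: lim_{n→∞} P( J^{(n)} = NA ) = 0; equivalently, the probability that |⋃_{j∈{1,…,k}} S_j^{(n)}| < (1−α)n tends to 0 as n → ∞. -/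
open MeasureTheory ProbabilityTheory Filter
open scoped Classical

variable {𝒳 : Type*} [MeasurableSpace 𝒳] {W H k : ℕ}

/-!
If Algorithm 1 returns `NA`, then in particular the full parameter set does not cover a `(1 - α)`
fraction of the sample: otherwise the finite, nonempty family of covering sets would have a
`≺`-least element. The full set covers exactly when the empirical frequency of the event
`S = {∃ j, IoU (Y, f (X, j)) > τ}` is at least `1 - α`. By the strong law of large numbers this
frequency converges almost surely to `P S = μ_τ({1,…,k}) > 1 - α`, so the probability that it
falls below `1 - α` tends to zero.
-/

open Finset

lemma exists_forall_eq_or_of_isStrictTotalOrder {β : Type*} [Finite β] (r : β → β → Prop)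
    [IsStrictTotalOrder β r] {s : Set β} (hs : s.Nonempty) :
    ∃ a ∈ s, ∀ b ∈ s, a = b ∨ r a b := by
  obtain ⟨a, has, hmin⟩ := (Finite.wellFounded_of_trans_of_irrefl r).has_min s hs
  refine ⟨a, has, fun b hb => ?_⟩
  rcases trichotomous_of r a b with h | h | h
  · exact Or.inr h
  · exact Or.inl h
  · exact absurd h (hmin b hb)

lemma ne_none_of_eq_some_iff_least {β : Type*} [Finite β] (r : β → β → Prop)
    [IsStrictTotalOrder β r] {C : β → Prop} {o : Option β}
    (ho : ∀ a, o = some a ↔ C a ∧ ∀ b, C b → a = b ∨ r a b) {a : β} (ha : C a) :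
    o ≠ none := by
  obtain ⟨b, hb, hleast⟩ := exists_forall_eq_or_of_isStrictTotalOrder r (s := {b | C b}) ⟨a, ha⟩
  rw [(ho b).2 ⟨hb, hleast⟩]
  exact Option.some_ne_none b

lemma card_filter_Icc_one_eq_card_filter_range (p : ℕ → Prop) [DecidablePred p] (n : ℕ) :
    #{i ∈ Icc 1 n | p i} = #{i ∈ range n | p (i + 1)} := by
  refine card_nbij' (· - 1) (· + 1) ?_ ?_ ?_ ?_ <;> intro i hi <;>
    simp only [coe_filter, mem_Icc, mem_range, Set.mem_ofPred_eq] at hi ⊢ <;> grind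

lemma card_filter_mem_eq_sum_indicator {Ω E : Type*} (Z : ℕ → Ω → E) (S : Set E) (s : Finset ℕ)
    (ω : Ω) : (#{i ∈ s | Z i ω ∈ S} : ℝ) = ∑ i ∈ s, S.indicator 1 (Z i ω) := by
  simp only [Set.indicator_apply, Pi.one_apply, sum_boole]

section Frequency

variable {Ω E : Type*} [MeasurableSpace Ω] [MeasurableSpace E] {μ : Measure Ω}

lemma tendsto_measure_lt_of_ae_tendsto [IsFiniteMeasure μ] {Y : ℕ → Ω → ℝ} {a c : ℝ}
    (hY : ∀ n, AEStronglyMeasurable (Y n) μ)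
    (hlim : ∀ᵐ ω ∂μ, Tendsto (Y · ω) atTop (nhds a)) (hc : c < a) :
    Tendsto (fun n => μ {ω | Y n ω < c}) atTop (nhds 0) := by
  have hgap := tendstoInMeasure_of_tendsto_ae (g := fun _ => a) hY hlim
    (ENNReal.ofReal (a - c)) (by simpa using hc)
  refine tendsto_of_tendsto_of_tendsto_of_le_of_le tendsto_const_nhds hgap (fun _ => zero_le)
    fun n => measure_mono fun ω (hω : Y n ω < c) => ?_
  change ENNReal.ofReal (a - c) ≤ edist (Y n ω) a
  rw [edist_dist, Real.dist_eq, abs_sub_comm]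
  exact ENNReal.ofReal_le_ofReal ((by linarith : a - c ≤ a - Y n ω).trans (le_abs_self _))

variable {Z : ℕ → Ω → E} {P : Measure E} {S : Set E}

lemma ae_tendsto_card_filter_mem_div [IsFiniteMeasure μ] (hZ : ∀ i, Measurable (Z i))
    (hindep : Pairwise fun i j => IndepFun (Z i) (Z j) μ) (hlaw : ∀ i, μ.map (Z i) = P)
    (hS : MeasurableSet S) :
    ∀ᵐ ω ∂μ, Tendsto (fun n : ℕ => (#{i ∈ range n | Z i ω ∈ S} : ℝ) / n) atTop
      (nhds (P S).toReal) := by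
  have hind : Measurable (S.indicator (1 : E → ℝ)) := measurable_one.indicator hS
  have hident : ∀ i, IdentDistrib (S.indicator 1 ∘ Z i) (S.indicator 1 ∘ Z 0) μ μ := fun i =>
    ⟨(hind.comp (hZ i)).aemeasurable, (hind.comp (hZ 0)).aemeasurable, by
      rw [← Measure.map_map hind (hZ i), ← Measure.map_map hind (hZ 0), hlaw, hlaw]⟩
  have hint : Integrable (S.indicator 1 ∘ Z 0) μ :=
    (integrable_map_measure hind.aestronglyMeasurable (hZ 0).aemeasurable).1
      ((integrable_const 1).indicator hS)
  have hmean : μ[S.indicator 1 ∘ Z 0] = (P S).toReal := by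
    rw [Function.comp_def, ← integral_map (hZ 0).aemeasurable hind.aestronglyMeasurable, hlaw,
      integral_indicator_one hS, measureReal_def]
  have hslln := strong_law_ae_real _ hint (fun i j hij => (hindep hij).comp hind hind) hident
  rw [hmean] at hslln
  simpa only [card_filter_mem_eq_sum_indicator, Function.comp_apply] using hslln

lemma tendsto_measure_card_filter_mem_lt [IsFiniteMeasure μ] (hZ : ∀ i, Measurable (Z i))
    (hindep : Pairwise fun i j => IndepFun (Z i) (Z j) μ) (hlaw : ∀ i, μ.map (Z i) = P)
    (hS : MeasurableSet S) {c : ℝ} (hc : c < (P S).toReal) :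
    Tendsto (fun n : ℕ => μ {ω | (#{i ∈ range n | Z i ω ∈ S} : ℝ) < c * n}) atTop (nhds 0) := by
  have hmeas : ∀ n : ℕ, AEStronglyMeasurable
      (fun ω => (#{i ∈ range n | Z i ω ∈ S} : ℝ) / n) μ := fun n => by
    simp only [card_filter_mem_eq_sum_indicator]
    exact ((Finset.measurable_sum _ fun i _ =>
      (measurable_one.indicator hS).comp (hZ i)).div_const _).aestronglyMeasurable
  refine tendsto_of_tendsto_of_tendsto_of_le_of_le tendsto_const_nhds
    (tendsto_measure_lt_of_ae_tendsto hmeas (ae_tendsto_card_filter_mem_div hZ hindep hlaw hS) hc)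
    (fun _ => zero_le) fun n => measure_mono fun ω (hω : _ < c * n) => ?_
  rcases n.eq_zero_or_pos with rfl | hn
  · simp at hω
  · exact (div_lt_iff₀ (by exact_mod_cast hn)).2 hω

end Frequency

lemma measurableSet_exists_lt_IoU {f : 𝒳 → Fin k → Mask W H}
    (hf : ∀ j, Measurable fun x => f x j) (τ : ℝ) (J : Finset (Fin k)) :
    MeasurableSet {p : 𝒳 × Mask W H | ∃ j ∈ J, τ < IoU p.2 (f p.1 j)} := by
  simp only [Set.ofPred_exists]
  refine .iUnion fun j => (MeasurableSet.const (j ∈ J)).inter ?_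
  exact measurableSet_lt measurable_const
    ((measurable_of_countable fun q : Mask W H × Mask W H => IoU q.1 q.2).comp
      (measurable_snd.prodMk ((hf j).comp measurable_fst)))

theorem algorithm1_NA_prob_tendsto_zero_general
    {Ω : Type*} [MeasurableSpace Ω]
    (Pr : Measure Ω) [IsProbabilityMeasure Pr]
    (P : Measure (𝒳 × Mask W H)) [IsProbabilityMeasure P]
    (f : 𝒳 → Fin k → Mask W H) (hf : ∀ j, Measurable (fun x => f x j))
    (α τ : ℝ)
    (Z : ℕ → Ω → 𝒳 × Mask W H) (hZmeas : ∀ i, Measurable (Z i))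
    (hindep : iIndepFun Z Pr)
    (hlaw : ∀ i, Measure.map (Z i) Pr = P)
    (hfeas : ENNReal.ofReal (1 - α) < muTau P f τ (Finset.univ : Finset (Fin k)))
    (lt : Finset (Fin k) → Finset (Fin k) → Prop)
    (hlto : IsStrictTotalOrder (Finset (Fin k)) lt)
    (Jn : ℕ → Ω → Option (Finset (Fin k)))
    (hJn : ∀ (n : ℕ) (ω : Ω) (J : Finset (Fin k)), Jn n ω = some J ↔
      (Covers Z f α τ n ω J ∧
        ∀ J' : Finset (Fin k), Covers Z f α τ n ω J' → J = J' ∨ lt J J')) :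
    Tendsto (fun n : ℕ => Pr {ω | Jn n ω = none}) atTop (nhds 0) := by
  have := hlto
  set S := {p : 𝒳 × Mask W H | ∃ j ∈ (univ : Finset (Fin k)), τ < IoU p.2 (f p.1 j)}
  have hS : MeasurableSet S := measurableSet_exists_lt_IoU hf τ univ
  have hPS : 1 - α < (P S).toReal :=
    (le_max_left _ 0).trans_lt (ENNReal.toReal_strict_mono (measure_ne_top P S) hfeas)
  have hrare := tendsto_measure_card_filter_mem_lt (Z := fun i => Z (i + 1)) (fun i => hZmeas _)
    (fun i j hij => hindep.indepFun (by simpa using hij)) (fun i => hlaw _) hS hPS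
  refine tendsto_of_tendsto_of_tendsto_of_le_of_le tendsto_const_nhds hrare (fun _ => zero_le)
    fun n => measure_mono fun ω (hω : Jn n ω = none) => ?_
  have hnc : ¬ Covers Z f α τ n ω univ := fun hcov =>
    ne_none_of_eq_some_iff_least lt (hJn n ω) hcov hω
  simpa only [Covers, not_le, card_filter_Icc_one_eq_card_filter_range, S, Set.mem_ofPred_eq]
    using hnc

/-- Under i.i.d. sampling and the feasibility assumption
`μ_τ({1,…,k}) > 1−α`, the probability that Algorithm 1 fails to return a parameter
set (`J^{(n)} = NA`, i.e. no subset covers a `(1−α)` fraction of the calibration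
samples) tends to zero. -/
theorem algorithm1_NA_prob_tendsto_zero
    (hk : 1 ≤ k) {Ω : Type*} [MeasurableSpace Ω]
    (Pr : Measure Ω) [IsProbabilityMeasure Pr]
    (P : Measure (𝒳 × Mask W H)) [IsProbabilityMeasure P]
    (f : 𝒳 → Fin k → Mask W H) (hf : ∀ j, Measurable (fun x => f x j))
    (α τ : ℝ) (hα : α ∈ Set.Ioo (0:ℝ) 1) (hτ : τ ∈ Set.Ioo (0:ℝ) 1)
    (Z : ℕ → Ω → 𝒳 × Mask W H) (hZmeas : ∀ i, Measurable (Z i))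
    (hindep : iIndepFun Z Pr)
    (hlaw : ∀ i, Measure.map (Z i) Pr = P)
    (hfeas : ENNReal.ofReal (1 - α) < muTau P f τ (Finset.univ : Finset (Fin k)))
    (lt : Finset (Fin k) → Finset (Fin k) → Prop)
    (hlto : IsStrictTotalOrder (Finset (Fin k)) lt)
    (hltcard : ∀ J J' : Finset (Fin k), J.card < J'.card → lt J J')
    (Jn : ℕ → Ω → Option (Finset (Fin k)))
    (hJn : ∀ (n : ℕ) (ω : Ω) (J : Finset (Fin k)), Jn n ω = some J ↔
      (Covers Z f α τ n ω J ∧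
        ∀ J' : Finset (Fin k), Covers Z f α τ n ω J' → J = J' ∨ lt J J')) :
    Tendsto (fun n : ℕ => Pr {ω | Jn n ω = none}) atTop (nhds 0) :=
  algorithm1_NA_prob_tendsto_zero_general Pr P f hf α τ Z hZmeas hindep hlaw hfeas lt hlto Jn hJn
end

section
/- Let ξ_1, …, ξ_{n+1} be real-valued random variables whose joint distribution is exchangeable (invariant under every permutation of the indices 1, …, n+1), and let 1 ≤ k ≤ n. Let ξ_{(k)} denote the k-th smallest value among ξ_1, …, ξ_n. Then P( ξ_{n+1} < ξ_{(k)} ) ≤ k/(n+1). -/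
open MeasureTheory ProbabilityTheory
open scoped ENNReal

open scoped Classical in
/-- The `k`-th smallest value (counted with multiplicity) among `v 0, …, v (n-1)`,
defined as the least `t` such that at least `k` of the values are `≤ t`. -/
noncomputable def kthSmallest {n : ℕ} (v : Fin n → ℝ) (k : ℕ) : ℝ :=
  sInf {t : ℝ | k ≤ (Finset.univ.filter (fun i : Fin n => v i ≤ t)).card}

open scoped Classical in
lemma lt_kthSmallest_iff {n k : ℕ} (hk1 : 1 ≤ k) (hkn : k ≤ n)
    (v : Fin n → ℝ) (x : ℝ) :
    x < kthSmallest v k ↔ (Finset.univ.filter (fun i : Fin n => v i ≤ x)).card < k := by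
  have hn : 0 < n := lt_of_lt_of_le hk1 hkn
  have hne' : (Finset.univ : Finset (Fin n)).Nonempty := ⟨⟨0, hn⟩, Finset.mem_univ _⟩
  set S : Set ℝ := {t : ℝ | k ≤ (Finset.univ.filter (fun i : Fin n => v i ≤ t)).card} with hS
  have hSne : S.Nonempty := by
    refine ⟨Finset.univ.sup' hne' v, ?_⟩
    have : (Finset.univ.filter (fun i : Fin n => v i ≤ Finset.univ.sup' hne' v)) = Finset.univ := by
      apply Finset.filter_true_of_mem
      intro i _
      exact Finset.le_sup' v (Finset.mem_univ i)
    simp only [hS, Set.mem_setOf_eq, this, Finset.card_univ, Fintype.card_fin]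
    exact hkn
  have hSbdd : BddBelow S := by
    refine ⟨Finset.univ.inf' hne' v, ?_⟩
    intro t ht
    have hcard : 1 ≤ (Finset.univ.filter (fun i : Fin n => v i ≤ t)).card :=
      le_trans hk1 ht
    obtain ⟨i, hi⟩ := Finset.card_pos.mp (lt_of_lt_of_le Nat.zero_lt_one hcard)
    have hvi : v i ≤ t := (Finset.mem_filter.mp hi).2
    exact le_trans (Finset.inf'_le v (Finset.mem_univ i)) hvi
  constructor
  · intro hx
    by_contra hcon
    push_neg at hcon
    have : x ∈ S := hcon
    exact absurd (csInf_le hSbdd this) (not_le.mpr hx)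
  · intro hcard
    -- there is some i with x < v i
    have hTne : (Finset.univ.filter (fun i : Fin n => x < v i)).Nonempty := by
      by_contra h
      rw [Finset.not_nonempty_iff_eq_empty, Finset.filter_eq_empty_iff] at h
      have : (Finset.univ.filter (fun i : Fin n => v i ≤ x)) = Finset.univ := by
        apply Finset.filter_true_of_mem
        intro i hi
        exact not_lt.mp (h hi)
      rw [this] at hcard
      simp only [Finset.card_univ, Fintype.card_fin] at hcard
      exact absurd hkn (not_le.mpr hcard)
    set m' := (Finset.univ.filter (fun i : Fin n => x < v i)).inf' hTne v with hm'
    have hxm' : x < m' := by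
      rw [hm', Finset.lt_inf'_iff]
      intro i hi
      exact (Finset.mem_filter.mp hi).2
    have hlb : ∀ t ∈ S, m' ≤ t := by
      intro t ht
      by_contra hcon
      push_neg at hcon
      have hsub : (Finset.univ.filter (fun i : Fin n => v i ≤ t)) ⊆
          (Finset.univ.filter (fun i : Fin n => v i ≤ x)) := by
        intro i hi
        rw [Finset.mem_filter] at hi ⊢
        refine ⟨hi.1, ?_⟩
        by_contra hvx
        push_neg at hvx
        have : i ∈ Finset.univ.filter (fun i : Fin n => x < v i) :=
          Finset.mem_filter.mpr ⟨Finset.mem_univ i, hvx⟩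
        have := Finset.inf'_le v this
        exact absurd (le_trans this hi.2) (not_le.mpr hcon)
      have := Finset.card_le_card hsub
      exact absurd ht (not_le.mpr (lt_of_le_of_lt this hcard))
    exact lt_of_lt_of_le hxm' (le_csInf hSne hlb)

open scoped Classical in
lemma count_small_le {m k : ℕ} (v : Fin m → ℝ) :
    (Finset.univ.filter (fun i : Fin m =>
      (Finset.univ.filter (fun j : Fin m => v j ≤ v i)).card ≤ k)).card ≤ k := by
  set C := Finset.univ.filter (fun i : Fin m =>
      (Finset.univ.filter (fun j : Fin m => v j ≤ v i)).card ≤ k) with hC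
  rcases C.eq_empty_or_nonempty with h | h
  · simp [h]
  · obtain ⟨i0, hi0, hmax⟩ := C.exists_max_image v h
    have hi0' : (Finset.univ.filter (fun j : Fin m => v j ≤ v i0)).card ≤ k :=
      (Finset.mem_filter.mp hi0).2
    have hsub : C ⊆ Finset.univ.filter (fun j : Fin m => v j ≤ v i0) := by
      intro j hj
      exact Finset.mem_filter.mpr ⟨Finset.mem_univ j, hmax j hj⟩
    exact le_trans (Finset.card_le_card hsub) hi0'

/-- If `ξ_1, …, ξ_{n+1}` are exchangeable real random variables and
`1 ≤ k ≤ n`, then `P(ξ_{n+1} < ξ_{(k)}) ≤ k/(n+1)`, where `ξ_{(k)}` is the `k`-th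
order statistic of `ξ_1, …, ξ_n`. -/
theorem exchangeable_order_statistic_bound
    {Ω : Type*} [MeasurableSpace Ω] (P : Measure Ω) [IsProbabilityMeasure P]
    (n : ℕ) (hn : 0 < n) (ξ : Fin (n + 1) → Ω → ℝ) (hmeas : ∀ i, Measurable (ξ i))
    (hexch : ∀ σ : Equiv.Perm (Fin (n + 1)),
      Measure.map (fun ω => fun i => ξ (σ i) ω) P = Measure.map (fun ω => fun i => ξ i ω) P)
    (k : ℕ) (hk1 : 1 ≤ k) (hkn : k ≤ n) :
    (P {ω | ξ (Fin.last n) ω < kthSmallest (fun i : Fin n => ξ i.castSucc ω) k}).toReal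
      ≤ k / (n + 1) := by
  classical
  set X : Ω → Fin (n + 1) → ℝ := fun ω i => ξ i ω with hX
  have hXmeas : Measurable X := measurable_pi_lambda _ hmeas
  set A : Fin (n + 1) → Set (Fin (n + 1) → ℝ) := fun i =>
    {v | (Finset.univ.filter (fun j : Fin (n + 1) => v j ≤ v i)).card ≤ k} with hA
  -- measurability of the counting function
  have hcardmeas : ∀ i : Fin (n + 1),
      Measurable (fun v : Fin (n + 1) → ℝ =>
        (Finset.univ.filter (fun j : Fin (n + 1) => v j ≤ v i)).card) := by
    intro i
    have : (fun v : Fin (n + 1) → ℝ =>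
        (Finset.univ.filter (fun j : Fin (n + 1) => v j ≤ v i)).card)
        = fun v => ∑ j : Fin (n + 1), if v j ≤ v i then 1 else 0 := by
      funext v
      exact Finset.card_filter _ _
    rw [this]
    apply Finset.measurable_sum
    intro j _
    exact Measurable.ite (measurableSet_le (measurable_pi_apply j) (measurable_pi_apply i))
      measurable_const measurable_const
  have hAmeas : ∀ i, MeasurableSet (A i) := by
    intro i
    have : A i = (fun v : Fin (n + 1) → ℝ =>
        (Finset.univ.filter (fun j : Fin (n + 1) => v j ≤ v i)).card) ⁻¹' (Set.Iic k) := rfl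
    rw [this]
    exact (hcardmeas i) measurableSet_Iic
  -- permutation action on the sets A
  have hAperm : ∀ (σ : Equiv.Perm (Fin (n + 1))) (i : Fin (n + 1)),
      (fun v : Fin (n + 1) → ℝ => fun j => v (σ j)) ⁻¹' A i = A (σ i) := by
    intro σ i
    ext v
    simp only [hA, Set.mem_preimage, Set.mem_setOf_eq]
    have hcards : (Finset.univ.filter (fun j : Fin (n + 1) => v (σ j) ≤ v (σ i)))
        = (Finset.univ.filter (fun j : Fin (n + 1) => v j ≤ v (σ i))).map
            σ.symm.toEmbedding := by
      ext j
      rw [Finset.mem_map_equiv]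
      simp
    rw [hcards, Finset.card_map]
  -- each event has the same probability
  have hsame : ∀ i : Fin (n + 1), P (X ⁻¹' A i) = P (X ⁻¹' A (Fin.last n)) := by
    intro i
    set σ : Equiv.Perm (Fin (n + 1)) := Equiv.swap (Fin.last n) i with hσ
    have hσlast : σ (Fin.last n) = i := Equiv.swap_apply_left _ _
    have h1 : X ⁻¹' A i = (fun ω => fun j => ξ (σ j) ω) ⁻¹' A (Fin.last n) := by
      rw [← hσlast, ← hAperm σ (Fin.last n)]
      rfl
    have hσmeas : Measurable (fun ω => fun j : Fin (n + 1) => ξ (σ j) ω) :=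
      measurable_pi_lambda _ (fun j => hmeas (σ j))
    rw [h1, ← Measure.map_apply hσmeas (hAmeas _), hexch σ,
      Measure.map_apply hXmeas (hAmeas _)]
  -- sum of the probabilities is at most k
  have hsum : ∑ i : Fin (n + 1), P (X ⁻¹' A i) ≤ (k : ℝ≥0∞) := by
    have h1 : ∀ i : Fin (n + 1), P (X ⁻¹' A i)
        = ∫⁻ ω, (X ⁻¹' A i).indicator (1 : Ω → ℝ≥0∞) ω ∂P := by
      intro i
      rw [lintegral_indicator_one (hXmeas (hAmeas i))]
    calc ∑ i : Fin (n + 1), P (X ⁻¹' A i)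
        = ∑ i : Fin (n + 1), ∫⁻ ω, (X ⁻¹' A i).indicator (1 : Ω → ℝ≥0∞) ω ∂P := by
          exact Finset.sum_congr rfl (fun i _ => h1 i)
      _ = ∫⁻ ω, ∑ i : Fin (n + 1), (X ⁻¹' A i).indicator (1 : Ω → ℝ≥0∞) ω ∂P := by
          exact (lintegral_finset_sum _ (fun i _ =>
            (measurable_const.indicator (hXmeas (hAmeas i))))).symm
      _ ≤ ∫⁻ _, (k : ℝ≥0∞) ∂P := by
          apply lintegral_mono
          intro ω
          dsimp only
          have h2 : ∑ i : Fin (n + 1), (X ⁻¹' A i).indicator (1 : Ω → ℝ≥0∞) ω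
              = ((Finset.univ.filter (fun i : Fin (n + 1) => X ω ∈ A i)).card : ℝ≥0∞) := by
            rw [Finset.card_filter, Nat.cast_sum]
            apply Finset.sum_congr rfl
            intro i _
            simp [Set.indicator_apply, Set.mem_preimage]
          rw [h2]
          have h3 := count_small_le (m := n + 1) (k := k) (X ω)
          have h4 : (Finset.univ.filter (fun i : Fin (n + 1) => X ω ∈ A i))
              = (Finset.univ.filter (fun i : Fin (n + 1) =>
                  (Finset.univ.filter (fun j : Fin (n + 1) => X ω j ≤ X ω i)).card ≤ k)) := by
            apply Finset.filter_congr
            intro i _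
            simp [hA, Set.mem_setOf_eq]
          rw [h4]
          exact_mod_cast h3
      _ = (k : ℝ≥0∞) := by simp
  -- identify the target event with X ⁻¹' A (Fin.last n)
  have hevent : {ω | ξ (Fin.last n) ω < kthSmallest (fun i : Fin n => ξ i.castSucc ω) k}
      = X ⁻¹' A (Fin.last n) := by
    ext ω
    simp only [Set.mem_setOf_eq, Set.mem_preimage, hA, Set.mem_setOf_eq]
    rw [lt_kthSmallest_iff hk1 hkn]
    have hcard : (Finset.univ.filter (fun j : Fin (n + 1) => X ω j ≤ X ω (Fin.last n))).card
        = (Finset.univ.filter (fun i : Fin n => ξ i.castSucc ω ≤ ξ (Fin.last n) ω)).card + 1 := by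
      rw [Finset.card_filter, Finset.card_filter, Fin.sum_univ_castSucc]
      simp [hX]
    rw [hcard]
    constructor
    · intro h; omega
    · intro h; omega
  -- conclude
  have hp : P (X ⁻¹' A (Fin.last n)) ≤ (k : ℝ≥0∞) / (((n : ℕ) + 1 : ℕ) : ℝ≥0∞) := by
    rw [ENNReal.le_div_iff_mul_le (Or.inl (by exact_mod_cast Nat.succ_ne_zero n))
      (Or.inl (ENNReal.natCast_ne_top _))]
    have := hsum
    rw [Finset.sum_congr rfl (fun i _ => hsame i), Finset.sum_const, Finset.card_univ,
      Fintype.card_fin, nsmul_eq_mul] at this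
    calc P (X ⁻¹' A (Fin.last n)) * (((n : ℕ) + 1 : ℕ) : ℝ≥0∞)
        = ((n + 1 : ℕ) : ℝ≥0∞) * P (X ⁻¹' A (Fin.last n)) := mul_comm _ _
      _ ≤ (k : ℝ≥0∞) := this
  rw [hevent]
  have hfin : (k : ℝ≥0∞) / (((n : ℕ) + 1 : ℕ) : ℝ≥0∞) ≠ ⊤ :=
    (ENNReal.div_lt_top (by simp) (by exact_mod_cast Nat.succ_ne_zero n)).ne
  calc (P (X ⁻¹' A (Fin.last n))).toReal
      ≤ ((k : ℝ≥0∞) / (((n : ℕ) + 1 : ℕ) : ℝ≥0∞)).toReal := ENNReal.toReal_mono hfin hp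
    _ = (k : ℝ) / ((n : ℝ) + 1) := by
        rw [ENNReal.toReal_div, ENNReal.toReal_natCast, ENNReal.toReal_natCast]
        push_cast
        ring
end

section
/- Fix a ground-truth binary mask Y, a threshold τ ∈ (0,1), and a finite list C of binary masks. For 0 ≤ λ ≤ length(C), let C_λ = Unique*(first λ entries of C, η) and let l(λ) = 1 if every entry ŷ of C_λ satisfies IoU(Y, ŷ) ≤ τ (in particular l(λ) = 1 when C_λ is empty), and l(λ) = 0 otherwise. Then C_λ is a prefix of C_{λ+1} for every λ < length(C), and the loss l(λ) is non-increasing in λ. -/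
open scoped Classical in
/-- The duplicate-removal procedure `Unique*` on finite lists of masks:
`Unique*([], η) = []` and `Unique*(C ++ [x], η)` keeps `x` iff no already-kept mask
has `IoU` with `x` exceeding `η`. -/
noncomputable def uniqueStar {W H : ℕ} (η : ℝ) (C : List (Mask W H)) : List (Mask W H) :=
  C.foldl (fun acc x => if ∃ y ∈ acc, η < IoU x y then acc else acc ++ [x]) []

open scoped Classical in
lemma uniqueStar_take_prefix {W H : ℕ} (η : ℝ) (C : List (Mask W H)) :
    ∀ lam : ℕ, lam < C.length →
      uniqueStar η (C.take lam) <+: uniqueStar η (C.take (lam + 1)) := by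
  intro lam h
  have htake : C.take (lam + 1) = C.take lam ++ [C.get ⟨lam, h⟩] := by
    rw [List.take_succ]
    simp [List.getElem?_eq_getElem h]
  rw [htake]
  unfold uniqueStar
  rw [List.foldl_append]
  simp only [List.foldl]
  split <;> simp
/-- For a ground-truth mask `Y`, threshold `τ ∈ (0,1)` and list `C`,
with `C_λ = Unique*(take λ C, η)` and loss `l(λ) = 1` iff every entry of `C_λ` has
`IoU` with `Y` at most `τ` (else `0`): `C_λ` is a prefix of `C_{λ+1}` for `λ < length C`,
and `l` is non-increasing on `{0, …, length C}`. -/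


theorem uniqueStar_take_prefix_and_loss_antitone {W H : ℕ}
    (η : ℝ) (hη : η ∈ Set.Ioo (0:ℝ) 1) (τ : ℝ) (hτ : τ ∈ Set.Ioo (0:ℝ) 1)
    (Y : Mask W H) (C : List (Mask W H)) (l : ℕ → ℝ)
    (hl : ∀ lam : ℕ, l lam =
      if ∀ yhat ∈ uniqueStar η (C.take lam), IoU Y yhat ≤ τ then 1 else 0) :
    (∀ lam : ℕ, lam < C.length →
        uniqueStar η (C.take lam) <+: uniqueStar η (C.take (lam + 1))) ∧
      ∀ lam₁ lam₂ : ℕ, lam₁ ≤ lam₂ → lam₂ ≤ C.length → l lam₂ ≤ l lam₁ := by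
  have hpref : ∀ lam : ℕ, lam < C.length →
      uniqueStar η (C.take lam) <+: uniqueStar η (C.take (lam + 1)) :=
    uniqueStar_take_prefix η C
  refine ⟨hpref, ?_⟩
  intro lam₁ lam₂ h12 h2
  have hchain : uniqueStar η (C.take lam₁) <+: uniqueStar η (C.take lam₂) := by
    clear hl
    induction lam₂ with
    | zero => simp_all
    | succ n ih =>
      rcases Nat.lt_or_ge lam₁ (n+1) with h | h
      · have h1n : lam₁ ≤ n := Nat.lt_succ_iff.mp h
        have hn : n < C.length := Nat.lt_of_succ_le h2
        exact (ih h1n hn.le).trans (hpref n hn)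
      · have : lam₁ = n + 1 := le_antisymm h12 h
        simp [this]
  rw [hl lam₁, hl lam₂]
  by_cases h2' : ∀ yhat ∈ uniqueStar η (C.take lam₂), IoU Y yhat ≤ τ
  · have h1' : ∀ yhat ∈ uniqueStar η (C.take lam₁), IoU Y yhat ≤ τ := fun y hy =>
      h2' y (hchain.subset hy)
    rw [if_pos h2', if_pos h1']
  · simp only [if_neg h2']
    split <;> norm_num
end

section
/- Let α ∈ (0,1), let k, n be positive integers with n ≥ (1−α)/α, and let L_1, …, L_{n+1} be random functions from {1,…,k+1} to [0,1] whose joint distribution is exchangeable (invariant under every permutation of the indices 1,…,n+1), such that almost surely each L_i is non-increasing on {1,…,k+1} and L_i(k+1) = 0. Define λ̂ = min{ λ ∈ {1,…,k+1} : (1/n) Σ_{i=1}^n L_i(λ) ≤ α − (1−α)/n } (this minimum exists since the empirical average at λ = k+1 equals 0 ≤ α − (1−α)/n). Then E[ L_{n+1}(λ̂) ] ≤ α. -/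
/-!
Let `T` be the oracle threshold: the least grid point at which the total loss
`L₁ + ⋯ + Lₙ₊₁` of all `n + 1` functions is at most `(n + 1) α` (the last grid point if there is
none; since every loss vanishes there, the total loss at `T` is always at most `(n + 1) α`).
`T` is a symmetric function of the losses, so by exchangeability `E[Lⱼ(T)]` does not depend on `j`
and therefore equals `E[(L₁(T) + ⋯ + Lₙ₊₁(T)) / (n + 1)] ≤ α`.
Since `Lₙ₊₁ ≤ 1`, the empirical condition defining `λ̂` forces the total loss at `λ̂` to be at
most `(n + 1) α`, so `T ≤ λ̂`, and monotonicity gives `Lₙ₊₁(λ̂) ≤ Lₙ₊₁(T)`.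
-/

open MeasureTheory ProbabilityTheory

section ApplyRandomPoint

variable {Ω Λ : Type*} [MeasurableSpace Ω] [MeasurableSpace Λ] [MeasurableSingletonClass Λ]
  {X : Ω → Λ → ℝ} {τ : Ω → Λ}

theorem measurable_apply_of_countable [Countable Λ] (hX : ∀ lam, Measurable fun ω => X ω lam)
    (hτ : Measurable τ) : Measurable fun ω => X ω (τ ω) :=
  (measurable_from_prod_countable_left (f := fun p : Ω × Λ => X p.1 p.2) hX).comp
    (measurable_id.prodMk hτ)

theorem integrable_apply_of_finite [Fintype Λ] {P : Measure Ω}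
    (hX : ∀ lam, Integrable (fun ω => X ω lam) P) (hτ : Measurable τ) :
    Integrable (fun ω => X ω (τ ω)) P := by
  classical
  have hsum : (fun ω => X ω (τ ω)) = fun ω => ∑ lam, (τ ⁻¹' {lam}).indicator (X · lam) ω := by
    ext ω
    simp [Set.indicator_apply]
  rw [hsum]
  exact integrable_finsetSum _ fun lam _ => (hX lam).indicator (hτ (measurableSet_singleton lam))

end ApplyRandomPoint

section FirstBelow

variable {Λ : Type*} [Fintype Λ] [LinearOrder Λ] [OrderTop Λ]

noncomputable def firstBelow (c : ℝ) (s : Λ → ℝ) : Λ :=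
  (insert ⊤ (Finset.univ.filter fun lam => s lam ≤ c)).min' (Finset.insert_nonempty _ _)

variable {c : ℝ} {s : Λ → ℝ}

theorem firstBelow_le {lam : Λ} (h : s lam ≤ c) : firstBelow c s ≤ lam :=
  Finset.min'_le _ _ (by simp [h])

theorem apply_firstBelow_le (h : s ⊤ ≤ c) : s (firstBelow c s) ≤ c := by
  have hmem := Finset.min'_mem (insert ⊤ (Finset.univ.filter fun lam => s lam ≤ c))
    (Finset.insert_nonempty _ _)
  rcases Finset.mem_insert.mp hmem with htop | hfilter
  · rw [firstBelow, htop]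
    exact h
  · exact (Finset.mem_filter.mp hfilter).2

theorem firstBelow_eq_iff {lam : Λ} :
    firstBelow c s = lam ↔ (lam = ⊤ ∨ s lam ≤ c) ∧ ∀ mu, s mu ≤ c → lam ≤ mu := by
  simp [firstBelow, Finset.min'_eq_iff]

theorem measurable_firstBelow [MeasurableSpace Λ] : Measurable (firstBelow (Λ := Λ) c) := by
  refine measurable_to_countable' fun lam => measurableSet_setOfPred.mpr ?_
  simp only [Set.mem_singleton_iff, firstBelow_eq_iff]
  have hle : ∀ mu : Λ, Measurable fun s : Λ → ℝ => s mu ≤ c := fun mu =>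
    measurableSet_setOfPred.mp (measurableSet_le (measurable_pi_apply mu) measurable_const)
  fun_prop

end FirstBelow

section Exchangeable

variable {ι Ω Λ : Type*} [Fintype ι] [MeasurableSpace Ω] {P : Measure Ω}
  [Fintype Λ] [LinearOrder Λ] [OrderTop Λ] [MeasurableSpace Λ] {L : ι → Ω → Λ → ℝ}

theorem measurable_firstBelow_sum (hL : ∀ i, Measurable (L i)) (c : ℝ) :
    Measurable fun ω => firstBelow c (∑ i, L i ω) :=
  measurable_firstBelow.comp (Finset.measurable_sum _ fun i _ => hL i)

variable [MeasurableSingletonClass Λ]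

theorem integral_apply_firstBelow_sum_eq (hL : ∀ i, Measurable (L i))
    (hexch : ∀ σ : Equiv.Perm ι, P.map (fun ω i => L (σ i) ω) = P.map (fun ω i => L i ω))
    (c : ℝ) (j j' : ι) :
    ∫ ω, L j ω (firstBelow c (∑ i, L i ω)) ∂P = ∫ ω, L j' ω (firstBelow c (∑ i, L i ω)) ∂P := by
  classical
  let σ := Equiv.swap j' j
  let φ : (ι → Λ → ℝ) → ℝ := fun f => f j' (firstBelow c (∑ i, f i))
  have hφ : Measurable φ :=
    measurable_apply_of_countable
      (fun lam => (measurable_pi_apply lam).comp (measurable_pi_apply j'))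
      (measurable_firstBelow_sum (fun i => measurable_pi_apply i) c)
  have hident : IdentDistrib (fun ω i => L (σ i) ω) (fun ω i => L i ω) P P :=
    ⟨(measurable_pi_lambda _ fun i => hL (σ i)).aemeasurable,
      (measurable_pi_lambda _ hL).aemeasurable, hexch σ⟩
  calc ∫ ω, L j ω (firstBelow c (∑ i, L i ω)) ∂P = ∫ ω, φ (fun i => L (σ i) ω) ∂P := by
        congr 1 with ω
        simp [φ, σ, Equiv.sum_comp σ (L · ω)]
    _ = ∫ ω, φ (fun i => L i ω) ∂P := (hident.comp hφ).integral_eq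

theorem card_mul_integral_apply_firstBelow_sum_le [IsProbabilityMeasure P]
    (hL : ∀ i, Measurable (L i)) (hint : ∀ i lam, Integrable (fun ω => L i ω lam) P)
    (hexch : ∀ σ : Equiv.Perm ι, P.map (fun ω i => L (σ i) ω) = P.map (fun ω i => L i ω))
    {c : ℝ} (htop : ∀ᵐ ω ∂P, ∑ i, L i ω ⊤ ≤ c) (j : ι) :
    Fintype.card ι * ∫ ω, L j ω (firstBelow c (∑ i, L i ω)) ∂P ≤ c := by
  have hint_T : ∀ j', Integrable (fun ω => L j' ω (firstBelow c (∑ i, L i ω))) P := fun j' =>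
    integrable_apply_of_finite (hint j') (measurable_firstBelow_sum hL c)
  calc Fintype.card ι * ∫ ω, L j ω (firstBelow c (∑ i, L i ω)) ∂P
      = ∑ j', ∫ ω, L j' ω (firstBelow c (∑ i, L i ω)) ∂P := by
        simp [integral_apply_firstBelow_sum_eq hL hexch c _ j]
    _ = ∫ ω, ∑ j', L j' ω (firstBelow c (∑ i, L i ω)) ∂P :=
        (integral_finsetSum _ fun j' _ => hint_T j').symm
    _ ≤ ∫ _, c ∂P := by
        refine integral_mono_ae (integrable_finsetSum _ fun j' _ => hint_T j')
          (integrable_const c) ?_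
        filter_upwards [htop] with ω hω
        simpa [Finset.sum_apply] using
          apply_firstBelow_le (s := ∑ i, L i ω) (by simpa [Finset.sum_apply] using hω)
    _ = c := by simp

end Exchangeable

theorem conformal_risk_control_discrete_general
    {Ω : Type*} [MeasurableSpace Ω] (P : Measure Ω) [IsProbabilityMeasure P]
    (α : ℝ) (hα : α ∈ Set.Ioo (0:ℝ) 1)
    (k n : ℕ) (hn : 0 < n)
    (L : Fin (n + 1) → Ω → Fin (k + 1) → ℝ)
    (hLmeas : ∀ i, Measurable (L i))
    (hrange : ∀ i ω lam, L i ω lam ∈ Set.Icc (0:ℝ) 1)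
    (hmono : ∀ i, ∀ᵐ ω ∂P, Antitone (L i ω))
    (hlast : ∀ i, ∀ᵐ ω ∂P, L i ω (Fin.last k) = 0)
    (hexch : ∀ σ : Equiv.Perm (Fin (n + 1)),
      Measure.map (fun ω => fun i => L (σ i) ω) P = Measure.map (fun ω => fun i => L i ω) P)
    (lamhat : Ω → Fin (k + 1))
    (hlamhat : ∀ᵐ ω ∂P,
      ((1 / (n : ℝ)) * ∑ i : Fin n, L i.castSucc ω (lamhat ω) ≤ α - (1 - α) / n) ∧
      ∀ lam : Fin (k + 1),
        ((1 / (n : ℝ)) * ∑ i : Fin n, L i.castSucc ω lam ≤ α - (1 - α) / n) →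
          lamhat ω ≤ lam) :
    ∫ ω, L (Fin.last n) ω (lamhat ω) ∂P ≤ α := by
  set T := fun ω => firstBelow ((n + 1) * α) (∑ i, L i ω)
  have hint : ∀ i lam, Integrable (fun ω => L i ω lam) P := fun i lam =>
    .of_bound ((measurable_pi_apply lam).comp (hLmeas i)).aestronglyMeasurable 1
      (ae_of_all _ fun ω => abs_le.mpr ⟨by linarith [(hrange i ω lam).1], (hrange i ω lam).2⟩)
  have htop : ∀ᵐ ω ∂P, ∑ i, L i ω ⊤ ≤ (n + 1) * α := by
    filter_upwards [ae_all_iff.mpr hlast] with ω hω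
    simp only [Fin.top_eq_last, hω, Finset.sum_const_zero]
    exact mul_nonneg (by positivity) hα.1.le
  have hT_le : ∀ᵐ ω ∂P, T ω ≤ lamhat ω := by
    filter_upwards [hlamhat] with ω hω
    have hn' : (0 : ℝ) < n := Nat.cast_pos.mpr hn
    have hemp := hω.1
    rw [one_div_mul_eq_div, div_le_iff₀ hn', sub_mul, div_mul_cancel₀ _ hn'.ne'] at hemp
    refine firstBelow_le ?_
    rw [Finset.sum_apply, Fin.sum_univ_castSucc]
    linarith [(hrange (Fin.last n) ω (lamhat ω)).2]
  have hbound := card_mul_integral_apply_firstBelow_sum_le hLmeas hint hexch htop (Fin.last n)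
  rw [Fintype.card_fin, Nat.cast_add_one] at hbound
  calc ∫ ω, L (Fin.last n) ω (lamhat ω) ∂P ≤ ∫ ω, L (Fin.last n) ω (T ω) ∂P :=
        integral_mono_of_nonneg (ae_of_all _ fun ω => (hrange _ ω _).1)
          (integrable_apply_of_finite (hint _) (measurable_firstBelow_sum hLmeas _))
          (by filter_upwards [hT_le, hmono (Fin.last n)] with ω hle hanti using hanti hle)
    _ ≤ α := le_of_mul_le_mul_left hbound (by positivity)

/-- discrete Conformal Risk Control. Let `α ∈ (0,1)`, `n ≥ (1−α)/α`,
and let `L 0, …, L n` be exchangeable random loss functions on the parameter grid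
`{1, …, k+1}` (modeled as `Fin (k+1)`), valued in `[0,1]`, almost surely non-increasing
with value `0` at the last grid point. If `λ̂` is the least grid point at which the
empirical average of the first `n` losses is `≤ α − (1−α)/n`, then the expected loss
of the held-out `(n+1)`-st function at `λ̂` is at most `α`. -/
theorem conformal_risk_control_discrete
    {Ω : Type*} [MeasurableSpace Ω] (P : Measure Ω) [IsProbabilityMeasure P]
    (α : ℝ) (hα : α ∈ Set.Ioo (0:ℝ) 1)
    (k n : ℕ) (hk : 0 < k) (hn : 0 < n) (hnα : (1 - α) / α ≤ (n : ℝ))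
    (L : Fin (n + 1) → Ω → Fin (k + 1) → ℝ)
    (hLmeas : ∀ i, Measurable (L i))
    (hrange : ∀ i ω lam, L i ω lam ∈ Set.Icc (0:ℝ) 1)
    (hmono : ∀ i, ∀ᵐ ω ∂P, Antitone (L i ω))
    (hlast : ∀ i, ∀ᵐ ω ∂P, L i ω (Fin.last k) = 0)
    (hexch : ∀ σ : Equiv.Perm (Fin (n + 1)),
      Measure.map (fun ω => fun i => L (σ i) ω) P = Measure.map (fun ω => fun i => L i ω) P)
    (lamhat : Ω → Fin (k + 1)) (hlamhatMeas : Measurable lamhat)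
    (hlamhat : ∀ᵐ ω ∂P,
      ((1 / (n : ℝ)) * ∑ i : Fin n, L i.castSucc ω (lamhat ω) ≤ α - (1 - α) / n) ∧
      ∀ lam : Fin (k + 1),
        ((1 / (n : ℝ)) * ∑ i : Fin n, L i.castSucc ω lam ≤ α - (1 - α) / n) →
          lamhat ω ≤ lam) :
    ∫ ω, L (Fin.last n) ω (lamhat ω) ∂P ≤ α :=
  conformal_risk_control_discrete_general P α hα k n hn L hLmeas hrange hmono hlast hexch lamhat
    hlamhat
end
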